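/- arXiv:1405.2151 — 7 statements merged into one kernel-verified Lean document; each statement's English description precedes it below -/
import Mathlib

section
/- Let G be a group and A ⊆ G a subset such that for every finitely supported probability measure μ on G and every ε > 0 there exists y ∈ G with μ(Ay) > 1 − ε. Then the complement G \ A cannot be covered by finitely many left translates, i.e., for every finite F ⊆ G we have G ≠ F·(G \ A). -/
open Pointwise

/-- A finitely additive probability measure on a set `X`. -/
structure FAMeasure (X : Type*) where
  m : Set X → ℝ
  nonneg : ∀ A : Set X, 0 ≤ m A
  total : m Set.univ = 1
  additive : ∀ A B : Set X, Disjoint A B → m (A ∪ B) = m A + m B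

/-- A Boolean ideal: a proper family of subsets closed under subsets and finite unions. -/
def IsBoolIdeal {X : Type*} (I : Set (Set X)) : Prop :=
  Set.univ ∉ I ∧ (∀ A ∈ I, ∀ B ⊆ A, B ∈ I) ∧ (∀ A ∈ I, ∀ B ∈ I, A ∪ B ∈ I)

/-- The `I`-difference set `Δ_I(A) = {g : gA ∩ A ∉ I}`. -/
def Delta (G : Type*) {X : Type*} [Group G] [MulAction G X] (I : Set (Set X)) (A : Set X) : Set G :=
  {g : G | g • A ∩ A ∉ I}

/-- `cov(B) ≤ n`: `B` can be covered by at most `n` left translates. -/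
def covLE {G : Type*} [Group G] (B : Set G) (n : ℕ) : Prop :=
  ∃ F : Finset G, F.card ≤ n ∧ (F : Set G) * B = Set.univ

/-- `cov(B) < n`. -/
def covLT {G : Type*} [Group G] (B : Set G) (n : ℕ) : Prop :=
  ∃ F : Finset G, F.card < n ∧ (F : Set G) * B = Set.univ

/-- Lower Darboux integral of a function against a finitely additive measure. -/
noncomputable def FAMeasure.lintegral {X : Type*} (μ : FAMeasure X) (f : X → ℝ) : ℝ :=
  sSup { r : ℝ | ∃ (n : ℕ) (c : Fin n → ℝ) (B : Fin n → Set X),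
    (Pairwise fun i j => Disjoint (B i) (B j)) ∧ (⋃ i, B i) = Set.univ ∧
    (∀ i, ∀ x ∈ B i, c i ≤ f x) ∧ r = ∑ i, c i * μ.m (B i) }

/-- Convolution `λ*μ` of a finitely additive measure on `G` with one on a `G`-space `X`. -/
noncomputable def conv {G X : Type*} [Group G] [MulAction G X]
    (lam : FAMeasure G) (mu : FAMeasure X) (B : Set X) : ℝ :=
  lam.lintegral (fun x => mu.m (x⁻¹ • B))

theorem stmt1 {G : Type*} [Group G] (A : Set G)
    (h : ∀ (F : Finset G) (w : G → ℝ), (∀ g, 0 ≤ w g) → (∑ g ∈ F, w g) = 1 →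
      ∀ ε : ℝ, 0 < ε → ∃ y : G, 1 - ε < ∑ g ∈ F, Set.indicator (A * {y}) w g) :
    ∀ F : Finset G, (F : Set G) * Aᶜ ≠ Set.univ := by
  classical
  intro F hF
  have hFne : F.Nonempty := by
    rcases F.eq_empty_or_nonempty with rfl | hne
    · exfalso
      rw [Finset.coe_empty, Set.empty_mul] at hF
      exact Set.empty_ne_univ hF
    · exact hne
  set n := F.card with hn
  have hnpos : 0 < n := Finset.card_pos.mpr hFne
  set F' := F.image (·⁻¹) with hF'
  have hcard : F'.card = n := Finset.card_image_of_injective _ inv_injective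
  set w : G → ℝ := fun g => if g ∈ F' then (n : ℝ)⁻¹ else 0 with hw
  have hwpos : ∀ g, 0 ≤ w g := by
    intro g
    simp only [hw]
    split <;> positivity
  have hsum : ∑ g ∈ F', w g = 1 := by
    simp only [hw]
    rw [Finset.sum_ite_of_true (fun g hg => hg), Finset.sum_const, hcard,
      nsmul_eq_mul]
    field_simp
  obtain ⟨y, hy⟩ := h F' w hwpos hsum ((n : ℝ)⁻¹) (by positivity)
  have hmem : (y⁻¹ : G) ∈ (F : Set G) * Aᶜ := hF ▸ Set.mem_univ _
  obtain ⟨f, hf, a, ha, hfa⟩ := hmem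
  have hfa' : f * a = y⁻¹ := hfa
  have hfF' : f⁻¹ ∈ F' := Finset.mem_image.mpr ⟨f, hf, rfl⟩
  have hg0 : f⁻¹ ∉ A * ({y} : Set G) := by
    intro hmem2
    rw [Set.mul_singleton] at hmem2
    obtain ⟨b, hb, hbz⟩ := hmem2
    have hbz' : b * y = f⁻¹ := hbz
    apply ha
    have h1 : a = f⁻¹ * y⁻¹ := by rw [eq_inv_mul_iff_mul_eq]; exact hfa'
    have h2 : b = f⁻¹ * y⁻¹ := by rw [← hbz']; group
    rw [h1, ← h2]
    exact hb
  have hle : ∑ g ∈ F', Set.indicator (A * ({y} : Set G)) w g ≤ 1 - (n : ℝ)⁻¹ := by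
    rw [← Finset.add_sum_erase _ _ hfF']
    have hind0 : Set.indicator (A * ({y} : Set G)) w f⁻¹ = 0 :=
      Set.indicator_of_notMem hg0 w
    rw [hind0, zero_add]
    calc ∑ g ∈ F'.erase f⁻¹, Set.indicator (A * ({y} : Set G)) w g
        ≤ ∑ g ∈ F'.erase f⁻¹, w g := by
          apply Finset.sum_le_sum
          intro i _
          exact Set.indicator_le_self' (fun x _ => hwpos x) i
      _ = (n - 1 : ℝ) * (n : ℝ)⁻¹ := by
          have : ∀ g ∈ F'.erase f⁻¹, w g = (n : ℝ)⁻¹ := by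
            intro g hg
            simp only [hw, if_pos (Finset.mem_of_mem_erase hg)]
          rw [Finset.sum_congr rfl this, Finset.sum_const,
            Finset.card_erase_of_mem hfF', hcard, nsmul_eq_mul]
          have : (1 : ℕ) ≤ n := hnpos
          push_cast [Nat.cast_sub this]
          ring
      _ = 1 - (n : ℝ)⁻¹ := by
          have hne : (n : ℝ) ≠ 0 := by positivity
          field_simp
  linarith
end

section
/- Let G be a group acting on a set X, let I be a G-invariant Boolean ideal on X, and let μ be a finitely additive probability measure on X vanishing on members of I. Suppose a subset A ⊆ X and a finite set F ⊆ G satisfy: for every x ∈ G there exists y ∈ F with μ(xA ∩ yA) > 0. Then G = F·Δ_I(A), hence cov(Δ_I(A)) ≤ |F|. -/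
open Pointwise

theorem stmt3 {G X : Type*} [Group G] [MulAction G X] (I : Set (Set X))
    (hI : IsBoolIdeal I) (hInv : ∀ (g : G), ∀ C ∈ I, g • C ∈ I)
    (μ : FAMeasure X) (hμ : ∀ C ∈ I, μ.m C = 0)
    (A : Set X) (F : Finset G)
    (h : ∀ x : G, ∃ y ∈ F, 0 < μ.m (x • A ∩ y • A)) :
    (F : Set G) * Delta G I A = Set.univ ∧ covLE (Delta G I A) F.card := by
  have key : (F : Set G) * Delta G I A = Set.univ := by
    apply Set.eq_univ_of_forall
    intro x
    obtain ⟨y, hyF, hpos⟩ := h x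
    refine ⟨y, hyF, y⁻¹ * x, ?_, by group⟩
    intro hmem
    have : y • ((y⁻¹ * x) • A ∩ A) ∈ I := hInv y _ hmem
    rw [Set.smul_set_inter, smul_smul, mul_inv_cancel_left] at this
    have := hμ _ this
    linarith
  exact ⟨key, F, le_refl _, key⟩
end

section
/- Let G be a group acting on a set X, I a G-invariant Boolean ideal on X, μ a finitely additive probability measure on X vanishing on I, and A ⊆ X with δ := sup_{x∈G} μ(xA) > 0. If F ⊆ G is a maximal subset such that μ(xA ∩ yA) = 0 for all distinct x, y ∈ F with μ(xA) > δ − ε for all x ∈ F (where 0 < ε < δ), then |F| ≤ 1/(δ − ε) and {x ∈ G : μ(xA) > δ − ε} ⊆ F·Δ_I(A). -/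
open Pointwise

lemma FAMeasure.empty {X : Type*} (μ : FAMeasure X) : μ.m ∅ = 0 := by
  have := μ.additive ∅ ∅ (by simp)
  simp at this; linarith

lemma FAMeasure.mono {X : Type*} (μ : FAMeasure X) {A B : Set X} (h : A ⊆ B) :
    μ.m A ≤ μ.m B := by
  have : B = A ∪ (B \ A) := (Set.union_diff_cancel h).symm
  rw [this, μ.additive _ _ Set.disjoint_sdiff_right]
  linarith [μ.nonneg (B \ A)]

lemma FAMeasure.union_eq {X : Type*} (μ : FAMeasure X) (A B : Set X) :
    μ.m (A ∪ B) = μ.m A + μ.m B - μ.m (A ∩ B) := by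
  have h1 : A ∪ B = A ∪ (B \ A) := by rw [Set.union_diff_self]
  have h2 : B = (A ∩ B) ∪ (B \ A) := by
    ext x; simp [Set.mem_diff]; tauto
  have e1 := μ.additive A (B \ A) Set.disjoint_sdiff_right
  have e2 := μ.additive (A ∩ B) (B \ A) (by
    apply Set.disjoint_left.mpr; rintro x ⟨hx, _⟩ hx2; exact hx2.2 hx)
  rw [h1, e1]
  nth_rewrite 2 [h2]
  rw [e2]; ring

lemma FAMeasure.subadd {X G : Type*} (μ : FAMeasure X) (f : G → Set X) (B : Set X)
    (S : Finset G) : μ.m (B ∩ ⋃ x ∈ S, f x) ≤ ∑ x ∈ S, μ.m (B ∩ f x) := by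
  classical
  induction S using Finset.induction_on with
  | empty => simp [μ.empty]
  | insert _ _ hnot ih =>
    rename_i a S
    rw [Finset.set_biUnion_insert, Set.inter_union_distrib_left,
      Finset.sum_insert hnot]
    have := μ.union_eq (B ∩ f a) (B ∩ ⋃ x ∈ S, f x)
    have h0 := μ.nonneg ((B ∩ f a) ∩ (B ∩ ⋃ x ∈ S, f x))
    linarith

lemma FAMeasure.superadd {X G : Type*} (μ : FAMeasure X) (f : G → Set X)
    (S : Finset G) (h : ∀ x ∈ S, ∀ y ∈ S, x ≠ y → μ.m (f x ∩ f y) = 0) :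
    ∑ x ∈ S, μ.m (f x) ≤ μ.m (⋃ x ∈ S, f x) := by
  classical
  induction S using Finset.induction_on with
  | empty => simp [μ.empty]
  | insert _ _ hnot ih =>
    rename_i a S
    rw [Finset.set_biUnion_insert, Finset.sum_insert hnot]
    have hsub := μ.subadd f (f a) S
    have hz : ∑ x ∈ S, μ.m (f a ∩ f x) = 0 := by
      apply Finset.sum_eq_zero
      intro x hx
      exact h a (Finset.mem_insert_self a S) x (Finset.mem_insert_of_mem hx)
        (by rintro rfl; exact hnot hx)
    have hnn := μ.nonneg (f a ∩ ⋃ x ∈ S, f x)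
    have h0 : μ.m (f a ∩ ⋃ x ∈ S, f x) = 0 := le_antisymm (by linarith) hnn
    have := μ.union_eq (f a) (⋃ x ∈ S, f x)
    have hih := ih (fun x hx y hy => h x (Finset.mem_insert_of_mem hx) y (Finset.mem_insert_of_mem hy))
    linarith

theorem stmt4 {G X : Type*} [Group G] [MulAction G X] (I : Set (Set X))
    (hI : IsBoolIdeal I) (hInv : ∀ (g : G), ∀ C ∈ I, g • C ∈ I)
    (μ : FAMeasure X) (hμ : ∀ C ∈ I, μ.m C = 0)
    (A : Set X) (δ ε : ℝ) (hδ : δ = ⨆ x : G, μ.m (x • A)) (hδ0 : 0 < δ)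
    (hε0 : 0 < ε) (hεδ : ε < δ)
    (F : Set G) (hFL : F ⊆ {x : G | δ - ε < μ.m (x • A)})
    (hnull : ∀ x ∈ F, ∀ y ∈ F, x ≠ y → μ.m (x • A ∩ y • A) = 0)
    (hmax : ∀ F' ⊆ {x : G | δ - ε < μ.m (x • A)}, F ⊆ F' →
      (∀ x ∈ F', ∀ y ∈ F', x ≠ y → μ.m (x • A ∩ y • A) = 0) → F' = F) :
    ∃ h : F.Finite, (h.toFinset.card : ℝ) ≤ 1 / (δ - ε) ∧
      {x : G | δ - ε < μ.m (x • A)} ⊆ F * Delta G I A := by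
  classical
  have hde : 0 < δ - ε := by linarith
  -- cardinality bound for any finite subset of F
  have key : ∀ S : Finset G, ↑S ⊆ F → (S.card : ℝ) ≤ 1 / (δ - ε) := by
    intro S hS
    have hsum : (S.card : ℝ) * (δ - ε) ≤ ∑ x ∈ S, μ.m (x • A) := by
      calc (S.card : ℝ) * (δ - ε) = ∑ _x ∈ S, (δ - ε) := by
            rw [Finset.sum_const, nsmul_eq_mul]
        _ ≤ _ := Finset.sum_le_sum fun x hx => le_of_lt (hFL (hS hx))
    have hsup := μ.superadd (fun x => x • A)  S
      (fun x hx y hy hxy => hnull x (hS hx) y (hS hy) hxy)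
    have h1 : μ.m (⋃ x ∈ S, x • A) ≤ 1 := by
      rw [← μ.total]; exact μ.mono (Set.subset_univ _)
    rw [le_div_iff₀ hde]
    linarith
  -- F is finite
  have hfin : F.Finite := by
    by_contra hinf
    have hinf' : F.Infinite := hinf
    obtain ⟨S, hS, hcard⟩ := hinf'.exists_subset_card_eq (⌊1 / (δ - ε)⌋₊ + 1)
    have := key S hS
    rw [hcard] at this
    have h2 := Nat.lt_floor_add_one (1 / (δ - ε))
    push_cast at this
    linarith
  refine ⟨hfin, key hfin.toFinset (by simp), ?_⟩
  -- covering
  intro x hx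
  simp only [Set.mem_setOf_eq] at hx
  have hAnI : A ∉ I := by
    intro hA
    have := hμ _ (hInv x A hA)
    linarith
  by_cases hxF : x ∈ F
  · refine ⟨x, hxF, 1, ?_, mul_one x⟩
    simpa [Delta, one_smul] using hAnI
  · -- maximality yields a witness
    have hne : insert x F ≠ F := by
      intro h
      exact hxF (h ▸ Set.mem_insert x F)
    have := hmax (insert x F) ?_ (Set.subset_insert x F)
    · have hbad : ¬ ∀ a ∈ insert x F, ∀ b ∈ insert x F, a ≠ b →
          μ.m (a • A ∩ b • A) = 0 := fun h => hne (this h)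
      push_neg at hbad
      obtain ⟨a, ha, b, hb, hab, habne⟩ := hbad
      -- one of a, b is x, the other is in F
      have hwit : ∃ y ∈ F, μ.m (x • A ∩ y • A) ≠ 0 := by
        rcases ha with rfl | ha
        · rcases hb with rfl | hb
          · exact absurd rfl hab
          · exact ⟨b, hb, habne⟩
        · rcases hb with rfl | hb
          · exact ⟨a, ha, by rwa [Set.inter_comm]⟩
          · exact absurd (hnull a ha b hb hab) habne
      obtain ⟨y, hyF, hy⟩ := hwit
      refine ⟨y, hyF, y⁻¹ * x, ?_, by group⟩
      simp only [Delta, Set.mem_setOf_eq, mul_smul, ← Set.smul_set_inter]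
      intro hmem
      have heq : y • (y⁻¹ • x • A ∩ A) = x • A ∩ y • A := by
        simp [Set.smul_set_inter, smul_smul, mul_inv_cancel_left]
      exact hy (hμ _ (heq ▸ hInv y _ hmem))
    · intro z hz
      rcases hz with rfl | hz
      · exact hx
      · exact hFL hz
end

section
/- Let G be a group acting on a set X, I a G-invariant Boolean ideal on X, and μ a finitely additive probability measure on X with μ(C) = 0 for all C ∈ I. For any partition X = A₁ ∪ ⋯ ∪ Aₙ, if μ(xAᵢ) ≤ 1/n for all x ∈ G and all i, then μ(xAᵢ) = 1/n for all x ∈ G and all i, and cov(Δ_I(Aᵢ)) ≤ n for every i. -/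
open Pointwise

namespace FAMeasure
variable {X : Type*} (μ : FAMeasure X)

lemma m_empty : μ.m ∅ = 0 := by
  have h := μ.additive ∅ ∅ (by simp)
  simp at h
  linarith

lemma mono_s5 {A B : Set X} (h : A ⊆ B) : μ.m A ≤ μ.m B := by
  have hd : Disjoint A (B \ A) := Set.disjoint_sdiff_right
  have h2 := μ.additive A (B \ A) hd
  rw [Set.union_diff_cancel h] at h2
  have := μ.nonneg (B \ A)
  linarith

lemma inexc (A B : Set X) : μ.m (A ∪ B) = μ.m A + μ.m B - μ.m (A ∩ B) := by
  have h1 : A ∪ B = A ∪ (B \ A) := by simp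
  have h2 : B = (A ∩ B) ∪ (B \ A) := by
    ext x; simp [Set.mem_diff]; tauto
  have e1 := μ.additive A (B \ A) Set.disjoint_sdiff_right
  have e2 := μ.additive (A ∩ B) (B \ A) (by
    apply Set.disjoint_left.mpr
    rintro x ⟨hxA, _⟩ ⟨_, hxA'⟩
    exact hxA' hxA)
  rw [← h2] at e2
  rw [h1, e1]
  linarith

lemma null_union {A B : Set X} (hA : μ.m A = 0) (hB : μ.m B = 0) : μ.m (A ∪ B) = 0 := by
  have := μ.inexc A B
  have h1 := μ.nonneg (A ∪ B)
  have h2 := μ.nonneg (A ∩ B)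
  linarith

lemma null_biUnion {ι : Type*} (F : Finset ι) (B : ι → Set X)
    (h : ∀ g ∈ F, μ.m (B g) = 0) : μ.m (⋃ g ∈ F, B g) = 0 := by
  classical
  induction F using Finset.induction_on with
  | empty => simpa using μ.m_empty
  | @insert a F ha ih =>

      rw [Finset.set_biUnion_insert]
      exact μ.null_union (h a (Finset.mem_insert_self a F))
        (ih fun g hg => h g (Finset.mem_insert_of_mem hg))

lemma sum_almost_disjoint {ι : Type*} (F : Finset ι) (B : ι → Set X)
    (h : ∀ g ∈ F, ∀ g' ∈ F, g ≠ g' → μ.m (B g ∩ B g') = 0) :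
    μ.m (⋃ g ∈ F, B g) = ∑ g ∈ F, μ.m (B g) := by
  classical
  induction F using Finset.induction_on with
  | empty => simpa using μ.m_empty
  | @insert a F ha ih =>

      rw [Finset.set_biUnion_insert, μ.inexc, Finset.sum_insert ha,
        ih (fun g hg g' hg' hne => h g (Finset.mem_insert_of_mem hg) g'
          (Finset.mem_insert_of_mem hg') hne)]
      have hnull : μ.m (B a ∩ ⋃ g ∈ F, B g) = 0 := by
        have : B a ∩ ⋃ g ∈ F, B g = ⋃ g ∈ F, B a ∩ B g := by
          rw [Set.inter_iUnion₂]
        rw [this]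
        exact μ.null_biUnion F _ (fun g hg => h a (Finset.mem_insert_self a F) g
          (Finset.mem_insert_of_mem hg) (by rintro rfl; exact ha hg))
      rw [hnull]
      ring

end FAMeasure


theorem stmt5 {G X : Type*} [Group G] [MulAction G X] (I : Set (Set X))
    (hI : IsBoolIdeal I) (hInv : ∀ (g : G), ∀ C ∈ I, g • C ∈ I)
    (μ : FAMeasure X) (hμ : ∀ C ∈ I, μ.m C = 0)
    (n : ℕ) (A : Fin n → Set X)
    (hdisj : Pairwise fun i j => Disjoint (A i) (A j))
    (hcov : ⋃ i, A i = Set.univ)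
    (hle : ∀ (x : G) (i : Fin n), μ.m (x • A i) ≤ 1 / n) :
    (∀ (x : G) (i : Fin n), μ.m (x • A i) = 1 / n) ∧ ∀ i, covLE (Delta G I (A i)) n := by
  classical
  have part1 : ∀ (x : G) (i : Fin n), μ.m (x • A i) = 1 / n := by
    intro x i
    have hn : 0 < n := i.pos
    have hnR : (0:ℝ) < n := by exact_mod_cast hn
    have hpair : ∀ j ∈ (Finset.univ : Finset (Fin n)), ∀ k ∈ (Finset.univ : Finset (Fin n)),
        j ≠ k → μ.m ((x • A j) ∩ (x • A k)) = 0 := by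
      intro j _ k _ hjk
      rw [← Set.smul_set_inter, Set.disjoint_iff_inter_eq_empty.mp (hdisj hjk)]
      simpa using μ.m_empty
    have hsum : ∑ j : Fin n, μ.m (x • A j) = 1 := by
      have h1 := μ.sum_almost_disjoint Finset.univ (fun j => x • A j) hpair
      have huniv : (⋃ j ∈ (Finset.univ : Finset (Fin n)), x • A j) = Set.univ := by
        simp only [Finset.mem_univ, Set.iUnion_true]
        rw [← Set.smul_set_iUnion x A, hcov, Set.smul_set_univ]
      rw [huniv, μ.total] at h1
      exact h1.symm
    by_contra hne
    have hlt : ∑ j : Fin n, μ.m (x • A j) < ∑ _j : Fin n, (1:ℝ) / n :=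
      Finset.sum_lt_sum (fun j _ => hle x j)
        ⟨i, Finset.mem_univ i, lt_of_le_of_ne (hle x i) hne⟩
    rw [hsum, Finset.sum_const, Finset.card_univ, Fintype.card_fin, nsmul_eq_mul] at hlt
    rw [mul_one_div, div_self (ne_of_gt hnR)] at hlt
    exact lt_irrefl _ hlt
  refine ⟨part1, ?_⟩
  intro i
  set B : Set X := A i with hB
  have hn : 0 < n := i.pos
  have hnR : (0:ℝ) < n := by exact_mod_cast hn
  have hnotI : ∀ x : G, x • B ∉ I := by
    intro x hx
    have h0 := hμ _ hx
    rw [part1 x i] at h0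
    have hpos : (0:ℝ) < 1 / n := by positivity
    linarith
  set P : Finset G → Prop :=
    fun F => ∀ g ∈ F, ∀ h ∈ F, g ≠ h → (g • B) ∩ (h • B) ∈ I with hP
  have hbound : ∀ F : Finset G, P F → F.card ≤ n := by
    intro F hF
    have hsum : μ.m (⋃ g ∈ F, g • B) = ∑ g ∈ F, μ.m (g • B) :=
      μ.sum_almost_disjoint F (fun g => g • B)
        (fun g hg h hh hne => hμ _ (hF g hg h hh hne))
    have hval : ∑ g ∈ F, μ.m (g • B) = F.card * (1 / n) := by
      rw [Finset.sum_congr rfl (fun g _ => part1 g i), Finset.sum_const, nsmul_eq_mul]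
    have hle1 : μ.m (⋃ g ∈ F, g • B) ≤ 1 := by
      rw [← μ.total]; exact μ.mono_s5 (Set.subset_univ _)
    rw [hsum, hval] at hle1
    have : (F.card : ℝ) ≤ n := by
      rw [mul_one_div, div_le_one hnR] at hle1
      linarith
    exact_mod_cast this
  set S : Set ℕ := {k | ∃ F : Finset G, P F ∧ F.card = k} with hS
  have hS0 : 0 ∈ S := ⟨∅, by intro g hg; simp at hg, Finset.card_empty⟩
  have hSbdd : BddAbove S := ⟨n, fun k ⟨F, hF, hcard⟩ => hcard ▸ hbound F hF⟩
  obtain ⟨F, hFP, hFcard⟩ : ∃ F : Finset G, P F ∧ F.card = sSup S :=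
    Nat.sSup_mem ⟨0, hS0⟩ hSbdd
  have hFmax : ∀ F' : Finset G, P F' → F'.card ≤ F.card := by
    intro F' hF'
    rw [hFcard]
    exact le_csSup hSbdd ⟨F', hF', rfl⟩
  refine ⟨F, hFcard ▸ hbound F hFP, ?_⟩
  apply Set.eq_univ_of_forall
  intro x
  have key : ∃ g ∈ F, (x • B) ∩ (g • B) ∉ I := by
    by_cases hxF : x ∈ F
    · exact ⟨x, hxF, by rw [Set.inter_self]; exact hnotI x⟩
    · by_contra hcon
      push_neg at hcon
      have hPins : P (insert x F) := by
        intro g hg h hh hne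
        rcases Finset.mem_insert.mp hg with rfl | hg' <;>
          rcases Finset.mem_insert.mp hh with rfl | hh'
        · exact absurd rfl hne
        · exact hcon h hh'
        · rw [Set.inter_comm]; exact hcon g hg'
        · exact hFP g hg' h hh' hne
      have := hFmax _ hPins
      rw [Finset.card_insert_of_notMem hxF] at this
      omega
  obtain ⟨g, hgF, hgI⟩ := key
  have hmem : g⁻¹ * x ∈ Delta G I B := by
    intro hdel
    apply hgI
    have h2 := hInv g _ hdel
    have h3 : g • ((g⁻¹ * x) • B ∩ B) = (x • B) ∩ (g • B) := by
      rw [Set.smul_set_inter, smul_smul, mul_inv_cancel_left]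
    rwa [h3] at h2
  exact Set.mem_mul.mpr ⟨g, hgF, g⁻¹ * x, hmem, by group⟩
end

section
/- Let G be a group, a ∈ α a generator of the free group F_α, and A ⊆ F_α the set of reduced words ending in aⁿ for some nonzero integer n. Then F_α = Aa ∪ A, and for any two distinct generators b, c ∈ α \ {a}, the right translates Ab and Ac are disjoint. -/
open Pointwise

namespace FreeGroup

variable {α : Type*} [DecidableEq α]

lemma reduce_cons_self {x : α × Bool} {M : List (α × Bool)} (hM : reduce M = M)
    (h : ∀ y ∈ M.head?, ¬(x.1 = y.1 ∧ x.2 = !y.2)) : reduce (x :: M) = x :: M := by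
  rw [reduce.cons, hM]
  cases M with
  | nil => rfl
  | cons hd tl =>
    exact if_neg (h hd rfl)

lemma reduce_append_singleton {L : List (α × Bool)} {x : α × Bool} (hL : reduce L = L)
    (h : ∀ y ∈ L.getLast?, ¬(y.1 = x.1 ∧ y.2 = !x.2)) : reduce (L ++ [x]) = L ++ [x] := by
  have h1 : invRev (L ++ [x]) = (x.1, !x.2) :: invRev L := by
    simp [invRev]
  have h2 : reduce (invRev L) = invRev L := by
    rw [reduce_invRev, hL]
  have h3 : reduce ((x.1, !x.2) :: invRev L) = (x.1, !x.2) :: invRev L := by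
    apply reduce_cons_self h2
    intro y hy
    rcases L.eq_nil_or_concat with rfl | ⟨L', z, rfl⟩
    · simp [invRev] at hy
    · rw [List.concat_eq_append] at hy h
      simp only [invRev, List.map_append, List.reverse_append, List.map_cons, List.reverse_cons,
        List.map_nil, List.reverse_nil, List.nil_append, List.cons_append, List.head?_cons,
        Option.mem_some_iff] at hy
      have := h z (by simp)
      rintro ⟨hc1, hc2⟩
      rw [← hy] at hc1 hc2
      simp only at hc1 hc2
      exact this ⟨hc1.symm, by simpa using hc2.symm⟩
  have := congrArg invRev (h1 ▸ h3 : reduce (invRev (L ++ [x])) = (x.1,!x.2) :: invRev L)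
  rwa [reduce_invRev, invRev_invRev, ← h1, invRev_invRev] at this

lemma toWord_mul_singleton {w : FreeGroup α} {x : α × Bool}
    (h : ∀ y ∈ w.toWord.getLast?, ¬(y.1 = x.1 ∧ y.2 = !x.2)) :
    (w * mk [x]).toWord = w.toWord ++ [x] := by
  conv_lhs => rw [← mk_toWord (x := w)]
  rw [mul_mk, toWord_mk, reduce_append_singleton (reduce_toWord w) h]

end FreeGroup

namespace FGAux

open FreeGroup

variable {α : Type*} [DecidableEq α]

lemma toWord_mul_of {w : FreeGroup α} {b : α}
    (h : ∀ y ∈ w.toWord.getLast?, y.1 ≠ b) :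
    (w * FreeGroup.of b).toWord = w.toWord ++ [(b, true)] := by
  have : FreeGroup.of b = FreeGroup.mk [(b, true)] := rfl
  rw [this]
  exact toWord_mul_singleton (fun y hy hc => h y hy hc.1)

lemma toWord_mul_of_inv {w : FreeGroup α} {b : α}
    (h : ∀ y ∈ w.toWord.getLast?, y.1 ≠ b) :
    (w * (FreeGroup.of b)⁻¹).toWord = w.toWord ++ [(b, false)] := by
  have : (FreeGroup.of b)⁻¹ = FreeGroup.mk [(b, false)] := rfl
  rw [this]
  exact toWord_mul_singleton (fun y hy hc => h y hy hc.1)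

end FGAux

theorem stmt9 {α : Type*} [DecidableEq α] (a : α) :
    ∀ A : Set (FreeGroup α),
      A = {w : FreeGroup α | ∃ p : α × Bool, w.toWord.getLast? = some p ∧ p.1 = a} →
    (Set.univ : Set (FreeGroup α)) = A * {FreeGroup.of a} ∪ A ∧
    ∀ b c : α, b ≠ a → c ≠ a → b ≠ c →
      Disjoint (A * {FreeGroup.of b}) (A * {FreeGroup.of c}) := by
  intro A hA
  constructor
  · ext w
    simp only [Set.mem_univ, true_iff, Set.mem_union]
    by_cases hw : w ∈ A
    · exact Or.inr hw
    · left
      rw [Set.mul_singleton]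
      refine ⟨w * (FreeGroup.of a)⁻¹, ?_, by group⟩
      have hlast : ∀ y ∈ w.toWord.getLast?, y.1 ≠ a := by
        intro y hy hya
        exact hw (hA ▸ ⟨y, hy, hya⟩)
      rw [hA]
      refine ⟨(a, false), ?_, rfl⟩
      rw [FGAux.toWord_mul_of_inv hlast]
      simp
  · intro b c hb hc hbc
    refine Set.disjoint_left.mpr ?_
    rintro w hwb hwc
    rw [Set.mul_singleton] at hwb hwc
    obtain ⟨x, hx, rfl⟩ := hwb
    obtain ⟨x', hx', heq⟩ := hwc
    rw [hA] at hx hx'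
    obtain ⟨p, hp, hpa⟩ := hx
    obtain ⟨p', hp', hpa'⟩ := hx'
    have h1 : (x * FreeGroup.of b).toWord = x.toWord ++ [(b, true)] :=
      FGAux.toWord_mul_of (by rintro y hy rfl; rw [hp] at hy; cases hy; exact hb hpa)
    have h2 : (x' * FreeGroup.of c).toWord = x'.toWord ++ [(c, true)] :=
      FGAux.toWord_mul_of (by rintro y hy rfl; rw [hp'] at hy; cases hy; exact hc hpa')
    have := congrArg (fun z : FreeGroup α => z.toWord.getLast?) heq
    simp only [h1, h2, List.getLast?_append, List.getLast?_singleton, Option.or, Option.some_inj, Prod.mk.injEq] at this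
    exact hbc this.1.symm
end

section
/- Let G be a group, A ⊆ G a subset, J a left G-invariant Boolean ideal on G with A⁻¹ ∉ J, and F ⊆ G a finite set with G \ (F·A·A⁻¹) ∈ J. Then G = F·A·A⁻¹·A, and hence cov(AA⁻¹A) ≤ |F|. -/
open Pointwise

theorem stmt11 {G : Type*} [Group G] (A : Set G) (J : Set (Set G))
    (hJ : IsBoolIdeal J) (hJinv : ∀ (g : G), ∀ B ∈ J, g • B ∈ J)
    (hA : A⁻¹ ∉ J) (F : Finset G)
    (h : ((F : Set G) * A * A⁻¹)ᶜ ∈ J) :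
    (F : Set G) * A * A⁻¹ * A = Set.univ ∧ covLE (A * A⁻¹ * A) F.card := by
  have key : (F : Set G) * A * A⁻¹ * A = Set.univ := by
    ext x
    simp only [Set.mem_univ, iff_true]
    -- x • A⁻¹ ∉ J
    have hx : x • A⁻¹ ∉ J := by
      intro hmem
      have := hJinv x⁻¹ _ hmem
      rw [inv_smul_smul] at this
      exact hA this
    -- x • A⁻¹ is not contained in the complement
    by_contra hxmem
    apply hx
    apply hJ.2.1 _ h
    intro z hz
    obtain ⟨y, hy, rfl⟩ := hz
    intro hzmem
    apply hxmem
    rw [Set.mem_inv] at hy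
    have : x • y * y⁻¹ ∈ ((F : Set G) * A * A⁻¹) * A := Set.mul_mem_mul hzmem hy
    simpa [smul_eq_mul, mul_assoc] using this
  refine ⟨key, ⟨F, le_rfl, ?_⟩⟩
  rw [← mul_assoc, ← mul_assoc]
  exact key
end

section
/- Let G be a group acting on a set X, A ⊆ X, and let J be a left G-invariant Boolean ideal on G with Δ_I(A) ∉ J, where I is a G-invariant Boolean ideal on X. If F ⊆ G is finite with G \ (F·Δ_I(A)) ∈ J, then G = F·Δ_I(A)·Δ_I(A), hence cov(Δ_I(A)·Δ_I(A)) ≤ |F|. -/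
open Pointwise

theorem stmt12 {G X : Type*} [Group G] [MulAction G X] (I : Set (Set X))
    (hI : IsBoolIdeal I) (hIinv : ∀ (g : G), ∀ C ∈ I, g • C ∈ I)
    (A : Set X) (J : Set (Set G))
    (hJ : IsBoolIdeal J) (hJinv : ∀ (g : G), ∀ B ∈ J, g • B ∈ J)
    (hΔ : Delta G I A ∉ J) (F : Finset G)
    (h : ((F : Set G) * Delta G I A)ᶜ ∈ J) :
    (F : Set G) * Delta G I A * Delta G I A = Set.univ ∧
      covLE (Delta G I A * Delta G I A) F.card := by
  have hsym : ∀ g : G, g ∈ Delta G I A → g⁻¹ ∈ Delta G I A := by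
    intro g hg hmem
    apply hg
    have h1 : g • (g⁻¹ • A ∩ A) ∈ I := hIinv g _ hmem
    have h2 : g • (g⁻¹ • A ∩ A) = A ∩ g • A := by
      rw [Set.smul_set_inter, smul_inv_smul]
    rw [h2, Set.inter_comm] at h1
    exact h1
  have key : (F : Set G) * Delta G I A * Delta G I A = Set.univ := by
    apply Set.eq_univ_of_forall
    intro g
    have hgD : g • Delta G I A ∉ J := by
      intro hmem
      apply hΔ
      have := hJinv g⁻¹ _ hmem
      rwa [inv_smul_smul] at this
    have hnsub : ¬ (g • Delta G I A ⊆ ((F : Set G) * Delta G I A)ᶜ) := fun hsub =>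
      hgD (hJ.2.1 _ h _ hsub)
    rw [Set.not_subset] at hnsub
    obtain ⟨x, hx1, hx2⟩ := hnsub
    rw [Set.notMem_compl_iff] at hx2
    obtain ⟨d, hd, hxd⟩ := hx1
    obtain ⟨f, hf, d', hd', hfd'⟩ := hx2
    simp only [smul_eq_mul] at hxd hfd'
    have heq : f * d' = g * d := by rw [hxd, hfd']
    have : g = f * d' * d⁻¹ := by rw [heq]; group
    rw [this]
    exact Set.mul_mem_mul (Set.mul_mem_mul hf hd') (hsym d hd)
  exact ⟨key, F, le_refl _, by rw [← mul_assoc]; exact key⟩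
end
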